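/- arXiv:1804.00370 — 3 statements merged into one kernel-verified Lean document; each statement's English description precedes it below -/
import Mathlib

section
/- For a histogram H of nonnegative integers indexed 0..K, define the clipped histogram H' where adding a person to a group of size i < K decrements H'[i] and increments H'[i+1]. Then the L1 global sensitivity of H' (with respect to adding or removing a single entity from a group, with group sizes clipped at K) is at most 2. -/
/-- Clipped count-of-counts histogram: number of groups whose size clipped at `K` equals `j`. -/
def clippedHist (K : ℕ) (D : Multiset ℕ) (j : ℕ) : ℕ :=
  Multiset.card (D.filter (fun s => min s K = j))

/-- Neighboring databases: add one entity to some group, or remove one from a nonempty group. -/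
def NeighborDB (D1 D2 : Multiset ℕ) : Prop :=
  (∃ s ∈ D1, D2 = (s + 1) ::ₘ D1.erase s) ∨
  (∃ s ∈ D1, 1 ≤ s ∧ D2 = (s - 1) ::ₘ D1.erase s)

lemma clippedHist_cons (K u : ℕ) (E : Multiset ℕ) (j : ℕ) :
    clippedHist K (u ::ₘ E) j = (if min u K = j then 1 else 0) + clippedHist K E j := by
  simp only [clippedHist, Multiset.filter_cons, Multiset.card_add]
  split <;> simp

lemma key (K s t : ℕ) (E : Multiset ℕ) :
    ∑ j ∈ Finset.range (K + 1),
      ((clippedHist K (s ::ₘ E) j : ℤ) - (clippedHist K (t ::ₘ E) j : ℤ)).natAbs ≤ 2 := by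
  have hb : ∀ j ∈ Finset.range (K + 1),
      ((clippedHist K (s ::ₘ E) j : ℤ) - (clippedHist K (t ::ₘ E) j : ℤ)).natAbs ≤
        (if min s K = j then 1 else 0) + (if min t K = j then 1 else 0) := by
    intro j _
    rw [clippedHist_cons, clippedHist_cons]
    push_cast
    split <;> split <;> simp
  calc ∑ j ∈ Finset.range (K + 1),
        ((clippedHist K (s ::ₘ E) j : ℤ) - (clippedHist K (t ::ₘ E) j : ℤ)).natAbs
      ≤ ∑ j ∈ Finset.range (K + 1),
          ((if min s K = j then 1 else 0) + (if min t K = j then 1 else 0)) :=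
        Finset.sum_le_sum hb
    _ = 2 := by
        rw [Finset.sum_add_distrib, Finset.sum_ite_eq, Finset.sum_ite_eq]
        simp [Nat.lt_succ_iff, min_le_right]

theorem clippedHist_sensitivity_le_two (K : ℕ) (D1 D2 : Multiset ℕ)
    (h : NeighborDB D1 D2) :
    ∑ j ∈ Finset.range (K + 1),
      ((clippedHist K D1 j : ℤ) - (clippedHist K D2 j : ℤ)).natAbs ≤ 2 := by
  rcases h with ⟨s, hs, rfl⟩ | ⟨s, hs, -, rfl⟩ <;>
  · rw [show D1 = s ::ₘ D1.erase s from (Multiset.cons_erase hs).symm]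
    rw [Multiset.erase_cons_head]
    exact key K s _ _
end

section
/- The cumulative count-of-counts histogram H_c, where H_c[i] is the number of groups of size at most i (with sizes clipped at K), has L1 global sensitivity at most 1 with respect to adding or removing a single person from a group. -/
/-- Cumulative clipped count-of-counts histogram: number of groups with clipped size ≤ i. -/
def cumHist (K : ℕ) (D : Multiset ℕ) (i : ℕ) : ℕ :=
  Multiset.card (D.filter (fun s => min s K ≤ i))

lemma cumHist_cons (K : ℕ) (t : ℕ) (M : Multiset ℕ) (i : ℕ) :
    cumHist K (t ::ₘ M) i = (if min t K ≤ i then 1 else 0) + cumHist K M i := by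
  simp [cumHist, Multiset.filter_cons]
  split_ifs <;> simp

lemma aux_sum (K a b : ℕ) (hab : a ≤ b + 1) (hba : b ≤ a + 1) :
    ∑ i ∈ Finset.range (K + 1),
      ((if a ≤ i then (1 : ℤ) else 0) - (if b ≤ i then 1 else 0)).natAbs ≤ 1 := by
  calc ∑ i ∈ Finset.range (K + 1),
        ((if a ≤ i then (1 : ℤ) else 0) - (if b ≤ i then 1 else 0)).natAbs
      ≤ ∑ i ∈ Finset.range (K + 1), (if i = min a b then 1 else 0) := by
        apply Finset.sum_le_sum
        intro i _
        split_ifs <;> simp_all <;> omega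
    _ ≤ 1 := by
        rw [Finset.sum_ite_eq']
        split_ifs <;> simp

theorem cumHist_sensitivity_le_one (K : ℕ) (D1 D2 : Multiset ℕ)
    (h : NeighborDB D1 D2) :
    ∑ i ∈ Finset.range (K + 1),
      ((cumHist K D1 i : ℤ) - (cumHist K D2 i : ℤ)).natAbs ≤ 1 := by
  rcases h with ⟨s, hs, rfl⟩ | ⟨s, hs, hs1, rfl⟩
  · have hD : D1 = s ::ₘ D1.erase s := (Multiset.cons_erase hs).symm
    calc ∑ i ∈ Finset.range (K + 1),
          ((cumHist K D1 i : ℤ) - (cumHist K ((s + 1) ::ₘ D1.erase s) i : ℤ)).natAbs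
        = ∑ i ∈ Finset.range (K + 1),
            ((if min s K ≤ i then (1 : ℤ) else 0) - (if min (s + 1) K ≤ i then 1 else 0)).natAbs := by
          apply Finset.sum_congr rfl
          intro i _
          rw [hD, cumHist_cons, cumHist_cons, Multiset.erase_cons_head]
          push_cast
          ring_nf
      _ ≤ 1 := aux_sum K _ _ (by omega) (by omega)
  · have hD : D1 = s ::ₘ D1.erase s := (Multiset.cons_erase hs).symm
    calc ∑ i ∈ Finset.range (K + 1),
          ((cumHist K D1 i : ℤ) - (cumHist K ((s - 1) ::ₘ D1.erase s) i : ℤ)).natAbs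
        = ∑ i ∈ Finset.range (K + 1),
            ((if min s K ≤ i then (1 : ℤ) else 0) - (if min (s - 1) K ≤ i then 1 else 0)).natAbs := by
          apply Finset.sum_congr rfl
          intro i _
          rw [hD, cumHist_cons, cumHist_cons, Multiset.erase_cons_head]
          push_cast
          ring_nf
      _ ≤ 1 := aux_sum K _ _ (by omega) (by omega)
end

section
/- Let x : Fin n → ℝ and y : Fin n → ℝ be two nondecreasing sequences. Then for any permutation σ of Fin n, sum_i |x i - y i| ≤ sum_i |x i - y (σ i)|. That is, the identity matching is an optimal bipartite matching between two sorted sequences under absolute-difference cost. -/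
/-!
Call a cost `c` *Monge* if uncrossing two matched pairs never costs more:
`c a c' + c b d ≤ c a d + c b c'` whenever `a ≤ b` and `c' ≤ d`; the cost `|a - b|` is Monge.
For such a cost, composing a matching `σ` with the transposition that sends `0` to `σ⁻¹ 0`
uncrosses the pairs at `0` and `σ⁻¹ 0` (both sequences are smallest at `0`), so it does not
increase the total cost and yields a matching fixing `0`. Induction on `n` finishes the proof.
-/

open Equiv Finset

theorem abs_sub_add_abs_sub_le {α : Type*} [AddCommGroup α] [LinearOrder α] [IsOrderedAddMonoid α]
    {a b c d : α} (hab : a ≤ b) (hcd : c ≤ d) :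
    |a - c| + |b - d| ≤ |a - d| + |b - c| := by
  grind [abs_of_nonneg, abs_of_neg]

theorem Equiv.Perm.exists_succ_apply_eq_of_apply_zero {n : ℕ} {τ : Perm (Fin (n + 1))}
    (hτ : τ 0 = 0) : ∃ e : Perm (Fin n), ∀ i, τ i.succ = (e i).succ := by
  obtain ⟨⟨p, e⟩, rfl⟩ := Perm.decomposeFin.symm.surjective τ
  rw [Perm.decomposeFin_symm_apply_zero] at hτ
  exact ⟨e, fun i => by simp [Perm.decomposeFin_symm_apply_succ, hτ]⟩

section Monge

variable {ι α β M : Type*} [Preorder α] [Preorder β]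
  [AddCommMonoid M] [PartialOrder M] [IsOrderedAddMonoid M] {c : α → β → M}

theorem sum_comp_mul_swap_le [Fintype ι] [DecidableEq ι]
    (hc : ∀ a b c' d, a ≤ b → c' ≤ d → c a c' + c b d ≤ c a d + c b c')
    (x : ι → α) (y : ι → β) (σ : Perm ι) {i j : ι}
    (hx : x i ≤ x j) (hy : y (σ j) ≤ y (σ i)) :
    ∑ k, c (x k) (y ((σ * swap i j) k)) ≤ ∑ k, c (x k) (y (σ k)) := by
  obtain rfl | hij := eq_or_ne i j
  · simp
  rw [← sum_compl_add_sum {i, j}, ← sum_compl_add_sum {i, j} (fun k => c (x k) (y (σ k)))]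
  have h_off : ∀ k ∈ ({i, j} : Finset ι)ᶜ,
      c (x k) (y ((σ * swap i j) k)) = c (x k) (y (σ k)) := by
    intro k hk
    simp only [mem_compl, mem_insert, mem_singleton, not_or] at hk
    rw [Perm.mul_apply, swap_apply_of_ne_of_ne hk.1 hk.2]
  rw [sum_congr rfl h_off, sum_pair hij, sum_pair hij, Perm.mul_apply, Perm.mul_apply,
    swap_apply_left, swap_apply_right]
  exact add_le_add_right (hc _ _ _ _ hx hy) _

theorem Monotone.sum_le_sum_comp_perm_of_monge
    (hc : ∀ a b c' d, a ≤ b → c' ≤ d → c a c' + c b d ≤ c a d + c b c') :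
    ∀ {n : ℕ} {x : Fin n → α} {y : Fin n → β}, Monotone x → Monotone y →
      ∀ σ : Perm (Fin n), ∑ i, c (x i) (y i) ≤ ∑ i, c (x i) (y (σ i))
  | 0, _, _, _, _, _ => by simp
  | n + 1, x, y, hx, hy, σ => by
    set τ := σ * swap 0 (σ⁻¹ 0)
    have hτ_le : ∑ i, c (x i) (y (τ i)) ≤ ∑ i, c (x i) (y (σ i)) :=
      sum_comp_mul_swap_le hc x y σ (hx (Fin.zero_le _)) (hy (by simp))
    have hτ_zero : τ 0 = 0 := by simp [τ]
    obtain ⟨e, he⟩ := Perm.exists_succ_apply_eq_of_apply_zero hτ_zero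
    have ih := Monotone.sum_le_sum_comp_perm_of_monge hc
      (hx.comp Fin.strictMono_succ.monotone) (hy.comp Fin.strictMono_succ.monotone) e
    calc ∑ i, c (x i) (y i)
        ≤ c (x 0) (y 0) + ∑ i : Fin n, c (x i.succ) (y (e i).succ) := by
          rw [Fin.sum_univ_succ]
          exact add_le_add_right ih _
      _ = ∑ i, c (x i) (y (τ i)) := by
          rw [Fin.sum_univ_succ (f := fun i => c (x i) (y (τ i))), hτ_zero]
          simp only [he]
      _ ≤ _ := hτ_le

end Monge

theorem identity_matching_optimal (n : ℕ) (x y : Fin n → ℝ)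
    (hx : Monotone x) (hy : Monotone y) (σ : Equiv.Perm (Fin n)) :
    ∑ i, |x i - y i| ≤ ∑ i, |x i - y (σ i)| :=
  hx.sum_le_sum_comp_perm_of_monge (c := fun a b => |a - b|)
    (fun _ _ _ _ => abs_sub_add_abs_sub_le) hy σ
end
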